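/- Let M be a compact smooth manifold, E a smooth complex vector bundle of finite rank over M, and x ∈ M. Then the kernel of the evaluation map ev_x : Γ^∞(E) → E_x, s ↦ s(x), equals the submodule I_x·Γ^∞(E) generated by products f·s with f ∈ I_x and s ∈ Γ^∞(E); consequently ev_x induces a ℂ-linear isomorphism Γ^∞(E)/(I_x·Γ^∞(E)) ≅ E_x. -/

import Mathlib

/-!
Sections in `I_x · Γ(E)` vanish at `x` because `(f • s)(x) = f(x) • s(x)`. Conversely, take a
trivialization `e` of `E` near `x`, a basis of the model fiber and a smooth bump function `ψ`
with `ψ x = 1` and `tsupport ψ` inside the base set of `e`. Cutting off the induced local frame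
and the frame coefficients of `s` by `ψ` gives global smooth sections `σᵢ` and functions `cᵢ`
with `s = (1 - ψ²) • s + ∑ cᵢ • σᵢ`; if `s x = 0` then `1 - ψ²` and every `cᵢ` vanish at `x`.
Local frames are taken over the scalar field `ℝ` of the manifold, so the frame is real and the
`cᵢ` are complexified. The same cut-off frame shows that evaluation at `x` is
surjective, so it descends to the isomorphism on the quotient.
-/

open Bundle Manifold
open scoped TensorProduct

local notation "∞" => (⊤ : ℕ∞)

noncomputable section

/-- Complex multiplication and addition are smooth over `ℝ`, so that the complex-valued smooth
functions on a real manifold form a (comm)ring. -/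
instance : ContMDiffRing 𝓘(ℝ, ℂ) ∞ ℂ where
  contMDiff_add := by
    rw [contMDiff_iff]
    refine ⟨continuous_add, fun x y => ?_⟩
    simp only [mfld_simps]
    exact contDiff_add.contDiffOn
  contMDiff_mul := by
    rw [contMDiff_iff]
    refine ⟨continuous_mul, fun x y => ?_⟩
    simp only [mfld_simps]
    exact contDiff_mul.contDiffOn

variable {EM : Type*} [NormedAddCommGroup EM] [NormedSpace ℝ EM] [FiniteDimensional ℝ EM]
  {HM : Type*} [TopologicalSpace HM] {IM : ModelWithCorners ℝ EM HM}
  {M : Type*} [TopologicalSpace M] [ChartedSpace HM M] [IsManifold IM ∞ M]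
  [T2Space M] [SecondCountableTopology M] [CompactSpace M]

/-- The constant functions make the smooth complex-valued functions a `ℂ`-algebra. -/
instance : Algebra ℂ C^∞⟮IM, M; 𝓘(ℝ, ℂ), ℂ⟯ :=
  RingHom.toAlgebra
    { toFun := fun c => ⟨fun _ => c, contMDiff_const⟩
      map_one' := rfl
      map_mul' := fun _ _ => rfl
      map_zero' := rfl
      map_add' := fun _ _ => rfl }

/-- `I_x`, the ideal of smooth complex-valued functions vanishing at the point `x`. -/
def SmoothMap.idealOfPoint (x : M) : Ideal C^∞⟮IM, M; 𝓘(ℝ, ℂ), ℂ⟯ :=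
  RingHom.ker (ContMDiffMap.evalRingHom x : C^∞⟮IM, M; 𝓘(ℝ, ℂ), ℂ⟯ →+* ℂ)

variable {F : Type*} [NormedAddCommGroup F] [NormedSpace ℂ F] [FiniteDimensional ℂ F]
  {V : M → Type*} [TopologicalSpace (TotalSpace F V)]
  [∀ x, AddCommGroup (V x)] [∀ x, Module ℂ (V x)] [∀ x, TopologicalSpace (V x)]
  [FiberBundle F V] [VectorBundle ℂ F V] [VectorBundle ℝ F V] [ContMDiffVectorBundle ∞ F V IM]

/-- Pointwise scalar multiplication of a smooth section by a smooth function. -/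
instance ContMDiffSection.instSMulSmoothMap :
    SMul C^∞⟮IM, M; 𝓘(ℝ, ℂ), ℂ⟯ Cₛ^∞⟮IM; F, V⟯ := by
  refine ⟨fun f s => ⟨fun x => f x • s x, ?_⟩⟩
  intro x₀
  have hs := s.contMDiff x₀
  have hf : ContMDiffAt IM 𝓘(ℝ, ℂ) ∞ f x₀ := f.contMDiff x₀
  rw [contMDiffAt_section] at hs ⊢
  set e := trivializationAt F V x₀
  have h1 : ContMDiffAt IM 𝓘(ℝ, F →L[ℝ] F) ∞
      (fun x => (ContinuousLinearMap.lsmul ℝ ℂ (f x) : F →L[ℝ] F)) x₀ :=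
    ContDiff.comp_contMDiffAt
      (g := ⇑(ContinuousLinearMap.lsmul ℝ ℂ : ℂ →L[ℝ] F →L[ℝ] F))
      (ContinuousLinearMap.contDiff _) hf
  refine (h1.clm_apply hs).congr_of_eventuallyEq ?_
  refine Filter.eventually_of_mem
    (e.open_baseSet.mem_nhds <| mem_baseSet_trivializationAt F V x₀) ?_
  intro x hx
  simp only [ContinuousLinearMap.lsmul_apply]
  exact (e.linear ℂ hx).2 (f x) (s x)

set_option linter.unusedSectionVars false in
@[simp]
theorem ContMDiffSection.coe_smul_smoothMap (f : C^∞⟮IM, M; 𝓘(ℝ, ℂ), ℂ⟯)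
    (s : Cₛ^∞⟮IM; F, V⟯) (x : M) : (f • s) x = f x • s x :=
  rfl

/-- The smooth sections of a smooth complex vector bundle form a module over the algebra of
smooth complex-valued functions on the base. -/
instance ContMDiffSection.instModuleSmoothMap :
    Module C^∞⟮IM, M; 𝓘(ℝ, ℂ), ℂ⟯ Cₛ^∞⟮IM; F, V⟯ where
  one_smul s := ContMDiffSection.ext fun x => one_smul ℂ (s x)
  mul_smul f g s := ContMDiffSection.ext fun x => mul_smul (f x) (g x) (s x)
  smul_zero f := ContMDiffSection.ext fun x => smul_zero (f x)
  smul_add f s t := ContMDiffSection.ext fun x => smul_add (f x) (s x) (t x)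
  add_smul f g s := ContMDiffSection.ext fun x => add_smul (f x) (g x) (s x)
  zero_smul s := ContMDiffSection.ext fun x => zero_smul ℂ (s x)

instance ContMDiffSection.instModuleComplex : Module ℂ Cₛ^∞⟮IM; F, V⟯ :=
  Module.compHom _ (algebraMap ℂ C^∞⟮IM, M; 𝓘(ℝ, ℂ), ℂ⟯)

instance ContMDiffSection.instIsScalarTowerComplex :
    IsScalarTower ℂ C^∞⟮IM, M; 𝓘(ℝ, ℂ), ℂ⟯ Cₛ^∞⟮IM; F, V⟯ :=
  ⟨fun c f s => by
    show (c • f) • s = algebraMap ℂ C^∞⟮IM, M; 𝓘(ℝ, ℂ), ℂ⟯ c • f • s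
    rw [Algebra.smul_def, mul_smul]⟩

end

open Topology

noncomputable section CutoffLocalFrame

variable {𝕜 : Type*} [NontriviallyNormedField 𝕜] {E : Type*} [NormedAddCommGroup E]
  [NormedSpace 𝕜 E] {H : Type*} [TopologicalSpace H] {I : ModelWithCorners 𝕜 E H}
  {M : Type*} [TopologicalSpace M] [ChartedSpace H M] {n : WithTop ℕ∞}

theorem ContMDiffOn.mul_of_tsupport {ψ f : M → 𝕜} {u : Set M} (hψ : ContMDiffOn I 𝓘(𝕜) n ψ u)
    (hu : IsOpen u) (hψu : tsupport ψ ⊆ u) (hf : ContMDiffOn I 𝓘(𝕜) n f u) :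
    ContMDiff I 𝓘(𝕜) n (ψ * f) :=
  contMDiff_of_tsupport fun x hx =>
    have hx : u ∈ 𝓝 x := hu.mem_nhds (hψu (tsupport_mul_subset_left hx))
    (hψ.contMDiffAt hx).mul (hf.contMDiffAt hx)

variable {F : Type*} [NormedAddCommGroup F] [NormedSpace 𝕜 F] {V : M → Type*}
  [TopologicalSpace (TotalSpace F V)] [∀ x, AddCommGroup (V x)] [∀ x, Module 𝕜 (V x)]
  [∀ x, TopologicalSpace (V x)] [FiberBundle F V] [VectorBundle 𝕜 F V]

@[simp]
theorem ContMDiffSection.coe_sum {α : Type*} (t : Finset α) (s : α → Cₛ^n⟮I; F, V⟯) :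
    ⇑(∑ i ∈ t, s i) = ∑ i ∈ t, ⇑(s i) :=
  map_sum (ContMDiffSection.coeAddHom I F n V) s t

variable [ContMDiffVectorBundle n F V I]
  (e : Trivialization F (TotalSpace.proj : TotalSpace F V → M)) [MemTrivializationAtlas e]
  {ι : Type*} (b : Module.Basis ι 𝕜 F) (ψ : C^n⟮I, M; 𝓘(𝕜), 𝕜⟯) (hψ : tsupport ψ ⊆ e.baseSet)

namespace Bundle.Trivialization

def cutoffLocalFrame (i : ι) : Cₛ^n⟮I; F, V⟯ :=
  ⟨⇑ψ • e.localFrame b i, ψ.contMDiff.contMDiffOn.smul_section_of_tsupport e.open_baseSet hψ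
    (e.contMDiffOn_localFrame_baseSet n b i)⟩

theorem cutoffLocalFrame_apply (i : ι) (x : M) :
    e.cutoffLocalFrame b ψ hψ i x = ψ x • e.localFrame b i x :=
  rfl

variable [ContMDiffVectorBundle 1 F V I] [FiniteDimensional 𝕜 F] [CompleteSpace 𝕜]

def cutoffLocalFrameCoeff (s : Cₛ^n⟮I; F, V⟯) (i : ι) : C^n⟮I, M; 𝓘(𝕜), 𝕜⟯ :=
  ⟨ψ * LinearMap.piApply (e.localFrameCoeff I b i) s,
    ψ.contMDiff.contMDiffOn.mul_of_tsupport e.open_baseSet hψ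
      (contMDiffOn_baseSet_localFrameCoeff b s.contMDiff.contMDiffOn i)⟩

theorem cutoffLocalFrameCoeff_apply (s : Cₛ^n⟮I; F, V⟯) (i : ι) (x : M) :
    e.cutoffLocalFrameCoeff b ψ hψ s i x = ψ x * e.localFrameCoeff I b i x (s x) :=
  rfl

theorem sq_smul_eq_sum_cutoffLocalFrameCoeff_smul [Fintype ι] (s : Cₛ^n⟮I; F, V⟯) (x : M) :
    ψ x ^ 2 • s x =
      ∑ i, e.cutoffLocalFrameCoeff b ψ hψ s i x • e.cutoffLocalFrame b ψ hψ i x := by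
  by_cases hx : x ∈ e.baseSet
  · conv_lhs => rw [e.eq_sum_localFrameCoeff_smul (I := I) (b := b) (s := s) hx]
    simp only [Finset.smul_sum, cutoffLocalFrameCoeff_apply, cutoffLocalFrame_apply, smul_smul]
    exact Finset.sum_congr rfl fun i _ => by ring_nf
  · simp [cutoffLocalFrame_apply, image_eq_zero_of_notMem_tsupport fun h => hx (hψ h)]

end Bundle.Trivialization

end CutoffLocalFrame

section RealManifold

variable {E : Type*} [NormedAddCommGroup E] [NormedSpace ℝ E] [FiniteDimensional ℝ E]
  {H : Type*} [TopologicalSpace H] {I : ModelWithCorners ℝ E H}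
  {M : Type*} [TopologicalSpace M] [ChartedSpace H M] [IsManifold I ∞ M] [T2Space M]

theorem exists_contMDiffMap_tsupport_subset_apply_eq_one {U : Set M} {x : M} (hU : U ∈ 𝓝 x) :
    ∃ ψ : C^∞⟮I, M; 𝓘(ℝ), ℝ⟯, tsupport ψ ⊆ U ∧ ψ x = 1 :=
  let ⟨f, _, hf⟩ := (SmoothBumpFunction.nhds_basis_tsupport (I := I) x).mem_iff.1 hU
  ⟨⟨f, f.contMDiff⟩, hf, f.eq_one⟩

variable {F : Type*} [NormedAddCommGroup F] [NormedSpace ℝ F] [FiniteDimensional ℝ F]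
  {V : M → Type*} [TopologicalSpace (TotalSpace F V)] [∀ x, AddCommGroup (V x)]
  [∀ x, Module ℝ (V x)] [∀ x, TopologicalSpace (V x)] [FiberBundle F V] [VectorBundle ℝ F V]
  [ContMDiffVectorBundle ∞ F V I]

theorem ContMDiffSection.exists_apply_eq (x : M) (v : V x) : ∃ s : Cₛ^∞⟮I; F, V⟯, s x = v := by
  let e := trivializationAt F V x
  have hx : x ∈ e.baseSet := FiberBundle.mem_baseSet_trivializationAt F V x
  let b := Module.finBasis ℝ F
  obtain ⟨ψ, hψ, hψx⟩ := exists_contMDiffMap_tsupport_subset_apply_eq_one (I := I)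
    (e.open_baseSet.mem_nhds hx)
  refine ⟨∑ i, (e.basisAt b hx).repr v i • e.cutoffLocalFrame b ψ hψ i, ?_⟩
  conv_rhs => rw [← (e.basisAt b hx).sum_repr v]
  simp [e.cutoffLocalFrame_apply, hψx, hx]

end RealManifold

noncomputable section ComplexBundle

variable {EM : Type*} [NormedAddCommGroup EM] [NormedSpace ℝ EM]
  {HM : Type*} [TopologicalSpace HM] {IM : ModelWithCorners ℝ EM HM}
  {M : Type*} [TopologicalSpace M] [ChartedSpace HM M]

def ContMDiffMap.ofReal (f : C^∞⟮IM, M; 𝓘(ℝ), ℝ⟯) : C^∞⟮IM, M; 𝓘(ℝ, ℂ), ℂ⟯ :=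
  ⟨fun y => f y, Complex.ofRealCLM.contDiff.comp_contMDiff f.contMDiff⟩

@[simp]
theorem ContMDiffMap.ofReal_apply (f : C^∞⟮IM, M; 𝓘(ℝ), ℝ⟯) (y : M) :
    ContMDiffMap.ofReal f y = f y :=
  rfl

@[simp]
theorem SmoothMap.mem_idealOfPoint {x : M} {f : C^∞⟮IM, M; 𝓘(ℝ, ℂ), ℂ⟯} :
    f ∈ SmoothMap.idealOfPoint x ↔ f x = 0 :=
  Iff.rfl

variable {F : Type*} [NormedAddCommGroup F] [NormedSpace ℂ F]
  {V : M → Type*} [TopologicalSpace (TotalSpace F V)]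
  [∀ x, AddCommGroup (V x)] [∀ x, Module ℂ (V x)] [∀ x, TopologicalSpace (V x)]
  [FiberBundle F V] [VectorBundle ℂ F V]

namespace ContMDiffSection

@[simp]
theorem smoothMap_smul_apply (f : C^∞⟮IM, M; 𝓘(ℝ, ℂ), ℂ⟯) (s : Cₛ^∞⟮IM; F, V⟯) (x : M) :
    (f • s) x = f x • s x :=
  rfl

variable [VectorBundle ℝ F V]

def evalₗ (x : M) : Cₛ^∞⟮IM; F, V⟯ →ₗ[ℂ] V x where
  toFun s := s x
  map_add' _ _ := rfl
  map_smul' _ _ := rfl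

@[simp]
theorem evalₗ_apply (x : M) (s : Cₛ^∞⟮IM; F, V⟯) : evalₗ x s = s x :=
  rfl

theorem apply_eq_zero_of_mem_idealOfPoint_smul_top {x : M} {s : Cₛ^∞⟮IM; F, V⟯}
    (hs : s ∈ SmoothMap.idealOfPoint (IM := IM) x •
      (⊤ : Submodule C^∞⟮IM, M; 𝓘(ℝ, ℂ), ℂ⟯ Cₛ^∞⟮IM; F, V⟯)) :
    s x = 0 := by
  refine Submodule.smul_induction_on hs (fun f hf t _ => ?_) (fun t u ht hu => ?_)
  · simp [SmoothMap.mem_idealOfPoint.1 hf]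
  · simp [ht, hu]

variable [FiniteDimensional ℂ F] [ContMDiffVectorBundle ∞ F V IM]

theorem eq_one_sub_sq_smul_add_sum_smul
    (e : Trivialization F (TotalSpace.proj : TotalSpace F V → M)) [MemTrivializationAtlas e]
    {ι : Type*} [Fintype ι] (b : Module.Basis ι ℝ F) (ψ : C^∞⟮IM, M; 𝓘(ℝ), ℝ⟯)
    (hψ : tsupport ψ ⊆ e.baseSet) (s : Cₛ^∞⟮IM; F, V⟯) :
    s = (1 - ContMDiffMap.ofReal ψ ^ 2) • s +
      ∑ i, ContMDiffMap.ofReal (e.cutoffLocalFrameCoeff b ψ hψ s i) •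
        e.cutoffLocalFrame b ψ hψ i := by
  ext y
  have := e.sq_smul_eq_sum_cutoffLocalFrameCoeff_smul b ψ hψ s y
  simp only [coe_add, Pi.add_apply, smoothMap_smul_apply, coe_sum, Finset.sum_apply]
  simp [← this, sub_smul, ← Complex.ofReal_pow]

variable [FiniteDimensional ℝ EM] [IsManifold IM ∞ M] [T2Space M]

theorem mem_idealOfPoint_smul_top_of_apply_eq_zero {x : M} {s : Cₛ^∞⟮IM; F, V⟯}
    (hs : s x = 0) :
    s ∈ SmoothMap.idealOfPoint (IM := IM) x •
      (⊤ : Submodule C^∞⟮IM, M; 𝓘(ℝ, ℂ), ℂ⟯ Cₛ^∞⟮IM; F, V⟯) := by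
  let e := trivializationAt F V x
  have hx : x ∈ e.baseSet := FiberBundle.mem_baseSet_trivializationAt F V x
  obtain ⟨ψ, hψ, hψx⟩ := exists_contMDiffMap_tsupport_subset_apply_eq_one (I := IM)
    (e.open_baseSet.mem_nhds hx)
  rw [eq_one_sub_sq_smul_add_sum_smul e (Module.finBasis ℝ F) ψ hψ s]
  refine add_mem (Submodule.smul_mem_smul ?_ trivial)
    (sum_mem fun i _ => Submodule.smul_mem_smul ?_ trivial)
  · simp [hψx]
  · simp [e.cutoffLocalFrameCoeff_apply, hs]

theorem evalₗ_surjective (x : M) : Function.Surjective (evalₗ (IM := IM) (F := F) (V := V) x) :=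
  fun v => exists_apply_eq x v

theorem ker_evalₗ (x : M) :
    LinearMap.ker (evalₗ (IM := IM) (F := F) (V := V) x) =
      (SmoothMap.idealOfPoint (IM := IM) x •
        (⊤ : Submodule C^∞⟮IM, M; 𝓘(ℝ, ℂ), ℂ⟯ Cₛ^∞⟮IM; F, V⟯)).restrictScalars ℂ :=
  Submodule.ext fun _ =>
    ⟨mem_idealOfPoint_smul_top_of_apply_eq_zero, apply_eq_zero_of_mem_idealOfPoint_smul_top⟩

end ContMDiffSection

end ComplexBundle

section

variable {EM : Type*} [NormedAddCommGroup EM] [NormedSpace ℝ EM] [FiniteDimensional ℝ EM]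
  {HM : Type*} [TopologicalSpace HM] {IM : ModelWithCorners ℝ EM HM}
  {M : Type*} [TopologicalSpace M] [ChartedSpace HM M] [IsManifold IM ∞ M]
  [T2Space M] [SecondCountableTopology M] [CompactSpace M]

variable {F : Type*} [NormedAddCommGroup F] [NormedSpace ℂ F] [FiniteDimensional ℂ F]
  {V : M → Type*} [TopologicalSpace (TotalSpace F V)]
  [∀ x, AddCommGroup (V x)] [∀ x, Module ℂ (V x)] [∀ x, TopologicalSpace (V x)]
  [FiberBundle F V] [VectorBundle ℂ F V] [VectorBundle ℝ F V] [ContMDiffVectorBundle ∞ F V IM]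

/-- The kernel of the evaluation of sections at `x` is exactly `I_x · Γ^∞(E)`; consequently
evaluation induces a `ℂ`-linear isomorphism `Γ^∞(E)/(I_x · Γ^∞(E)) ≅ E_x`. -/
theorem eval_ker_eq_idealOfPoint_smul (x : M) :
    (∀ s : Cₛ^∞⟮IM; F, V⟯,
      s x = 0 ↔ s ∈ SmoothMap.idealOfPoint (IM := IM) x • (⊤ : Submodule C^∞⟮IM, M; 𝓘(ℝ, ℂ), ℂ⟯ Cₛ^∞⟮IM; F, V⟯)) ∧
    ∃ e : (Cₛ^∞⟮IM; F, V⟯ ⧸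
        (SmoothMap.idealOfPoint (IM := IM) x • (⊤ : Submodule C^∞⟮IM, M; 𝓘(ℝ, ℂ), ℂ⟯ Cₛ^∞⟮IM; F, V⟯)))
        ≃ₗ[ℂ] V x,
      ∀ s : Cₛ^∞⟮IM; F, V⟯, e (Submodule.Quotient.mk s) = s x := by
  have hker := ContMDiffSection.ker_evalₗ (IM := IM) (F := F) (V := V) x
  refine ⟨fun s => SetLike.ext_iff.1 hker s, ?_⟩
  exact ⟨(Submodule.Quotient.restrictScalarsEquiv ℂ _).symm ≪≫ₗ
    Submodule.quotEquivOfEq _ _ hker.symm ≪≫ₗ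
    (ContMDiffSection.evalₗ x).quotKerEquivOfSurjective (ContMDiffSection.evalₗ_surjective x),
    fun s => rfl⟩

end
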